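/- Let r ≥ 2 and m, n ≥ 1 be integers. Let H = {τ ∈ Sym_r : τ(1) = 1} act by simultaneous conjugation on the set T of pairs (f, σ) of permutations of {1,…,r} such that f has exactly two cycles and the subgroup generated by f and σ acts transitively. The function (f,σ) ↦ m^{cyc(σ)} n^{cyc(fσ)} is constant on H-orbits, and the sum over the set of H-orbits of this function equals, in ℚ: ∑_{b=1}^{r−1} (1/b) · ( P_{r−b,b}(m,n) − P_{r−b}(m,n)·P_b(m,n) ), where P_s(m,n) = ∑_{σ ∈ Sym_s} m^{cyc(σ)} n^{cyc(ξ_s σ)} and P_{a,b}(m,n) = ∑_{σ ∈ Sym_{a+b}} m^{cyc(σ)} n^{cyc(ξ_{a,b} σ)}. In other words, ∑_{e,v} h_r^{(2)}(e,v) m^e n^v = ∑_{b=1}^{r−1} (1/b)(P_{r−b,b}(m,n) − P_{r−b}(m,n) P_b(m,n)), where h_r^{(2)}(e,v) is the number of rooted two-face hypermaps with r darts, e edges and v vertices. -/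

import Mathlib

open Equiv Equiv.Perm Finset
set_option linter.unusedSectionVars false



/-- Number of cycles of a permutation, counting fixed points as cycles of length 1
(i.e. the number of orbits). -/
def cyc {r : ℕ} (σ : Equiv.Perm (Fin r)) : ℕ :=
  σ.cycleType.card + (Finset.univ.filter fun x => σ x = x).card

/-- The equivalence relation on pairs of permutations of {1,…,r} given by simultaneous
conjugation by elements of H = {τ ∈ Sym_r : τ fixes the root element}. -/
def rootedRel (r : ℕ) (hr : 1 ≤ r) : Setoid (Equiv.Perm (Fin r) × Equiv.Perm (Fin r)) where
  r p q := ∃ τ : Equiv.Perm (Fin r), τ ⟨0, hr⟩ = ⟨0, hr⟩ ∧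
    q.1 = τ * p.1 * τ⁻¹ ∧ q.2 = τ * p.2 * τ⁻¹
  iseqv := by
    constructor
    · exact fun p => ⟨1, by simp, by simp, by simp⟩
    · rintro p q ⟨τ, h0, h1, h2⟩
      exact ⟨τ⁻¹, by nth_rewrite 1 [← h0]; simp,
        by rw [h1]; group, by rw [h2]; group⟩
    · rintro p q s ⟨τ, h0, h1, h2⟩ ⟨τ', h0', h1', h2'⟩
      exact ⟨τ' * τ, by rw [Equiv.Perm.mul_apply, h0, h0'],
        by rw [h1', h1]; group, by rw [h2', h2]; group⟩

/-- The permutation ξ_{a,b} of {1,…,a+b} consisting of the two cycles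
(1 2 … a)(a+1 a+2 … a+b). -/
def xiab (a b : ℕ) : Equiv.Perm (Fin (a + b)) :=
  finSumFinEquiv.symm.trans ((Equiv.sumCongr (finRotate a) (finRotate b)).trans finSumFinEquiv)

/-- P_s(m,n) = ∑_{σ ∈ Sym_s} m^{cyc σ} n^{cyc (ξ_s σ)}. -/
def Pone (s : ℕ) (m n : ℤ) : ℚ :=
  ∑ σ : Equiv.Perm (Fin s), (m : ℚ) ^ cyc σ * (n : ℚ) ^ cyc (finRotate s * σ)

/-- P_{a,b}(m,n) = ∑_{σ ∈ Sym_{a+b}} m^{cyc σ} n^{cyc (ξ_{a,b} σ)}. -/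
def Ptwo (a b : ℕ) (m n : ℤ) : ℚ :=
  ∑ σ : Equiv.Perm (Fin (a + b)), (m : ℚ) ^ cyc σ * (n : ℚ) ^ cyc (xiab a b * σ)

namespace HM


variable {α β : Type*} [DecidableEq α] [Fintype α] [DecidableEq β] [Fintype β]

/-- permCongr as a MulEquiv -/
def pCongr (e : α ≃ β) : Perm α ≃* Perm β :=
  { e.permCongr with
    map_mul' := fun p q => by
      ext x; simp [Equiv.permCongr_apply, Equiv.Perm.mul_apply] }

@[simp] lemma pCongr_apply (e : α ≃ β) (σ : Perm α) (x : β) :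
    pCongr e σ x = e (σ (e.symm x)) := rfl

@[simp] lemma pCongr_symm_apply (e : α ≃ β) (σ : Perm β) (x : α) :
    (pCongr e).symm σ x = e.symm (σ (e x)) := rfl

lemma pCongr_eq_permCongr (e : α ≃ β) (σ : Perm α) : pCongr e σ = e.permCongr σ := rfl

/-- general cycle count -/
def Cyc (σ : Perm α) : ℕ :=
  Multiset.card σ.cycleType + (Finset.univ.filter fun x => σ x = x).card

lemma cyc_eq_Cyc {r : ℕ} (σ : Perm (Fin r)) : cyc σ = Cyc σ := rfl

lemma cycleType_pCongr (e : α ≃ β) (σ : Perm α) : (pCongr e σ).cycleType = σ.cycleType := by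
  classical
  have h : ∀ x : β, (fun _ : β => True) x := fun _ => trivial
  let f : α ≃ {x : β // True} := e.trans (Equiv.subtypeUnivEquiv h).symm
  have key : σ.extendDomain f = pCongr e σ := by
    ext x
    rw [Equiv.Perm.extendDomain_apply_subtype σ f trivial]
    simp [f]
  rw [← key, Equiv.Perm.cycleType_extendDomain]

lemma fixcount_pCongr (e : α ≃ β) (σ : Perm α) :
    (Finset.univ.filter fun x : β => (pCongr e σ) x = x).card
      = (Finset.univ.filter fun x : α => σ x = x).card := by
  apply Finset.card_bij (fun x _ => e.symm x)
  · intro x hx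
    simp only [Finset.mem_filter, Finset.mem_univ, true_and] at hx ⊢
    have := congrArg e.symm hx
    simpa using this
  · intro x hx y hy hxy
    exact e.symm.injective hxy
  · intro y hy
    refine ⟨e y, ?_, by simp⟩
    simp only [Finset.mem_filter, Finset.mem_univ, true_and] at hy ⊢
    simp [hy]

lemma Cyc_pCongr (e : α ≃ β) (σ : Perm α) : Cyc (pCongr e σ) = Cyc σ := by
  unfold Cyc
  rw [cycleType_pCongr, fixcount_pCongr]

lemma Cyc_conj (σ τ : Perm α) : Cyc (τ * σ * τ⁻¹) = Cyc σ := by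
  have : τ * σ * τ⁻¹ = pCongr (τ : Perm α) σ := by
    ext x; simp [Equiv.Perm.mul_apply, pCongr_apply, ← Equiv.Perm.inv_def]
  rw [this, Cyc_pCongr]

end HM
-- === chunk 2 ===
namespace HM
variable {α β : Type*} [DecidableEq α] [Fintype α] [DecidableEq β] [Fintype β]

/-- embedding of α into the left part of the sum as a subtype -/
def eLeft : α ≃ {x : α ⊕ β // x.isLeft = true} where
  toFun a := ⟨Sum.inl a, rfl⟩
  invFun x := x.1.getLeft x.2
  left_inv a := rfl
  right_inv := by rintro ⟨(a | b), h⟩ <;> simp_all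

def eRight : β ≃ {x : α ⊕ β // x.isRight = true} where
  toFun b := ⟨Sum.inr b, rfl⟩
  invFun x := x.1.getRight x.2
  left_inv b := rfl
  right_inv := by rintro ⟨(a | b), h⟩ <;> simp_all

lemma sumCongr_left_eq_extend (p : Perm α) :
    (Equiv.sumCongr p (1 : Perm β)) = p.extendDomain (eLeft (β := β)) := by
  ext x
  cases x with
  | inl a =>
      rw [show Sum.inl a = ((eLeft (β := β)) (((eLeft (β := β)).symm ⟨Sum.inl a, rfl⟩ : α)) : α ⊕ β) by simp]
      rw [Equiv.Perm.extendDomain_apply_image]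
      rfl
  | inr b =>
      rw [Equiv.Perm.extendDomain_apply_not_subtype]
      · rfl
      · simp [eLeft]

lemma sumCongr_right_eq_extend (q : Perm β) :
    (Equiv.sumCongr (1 : Perm α) q) = q.extendDomain (eRight (α := α)) := by
  ext x
  cases x with
  | inl a =>
      rw [Equiv.Perm.extendDomain_apply_not_subtype]
      · rfl
      · simp [eRight]
  | inr b =>
      rw [show Sum.inr b = ((eRight (α := α)) (((eRight (α := α)).symm ⟨Sum.inr b, rfl⟩ : β)) : α ⊕ β) by simp]
      rw [Equiv.Perm.extendDomain_apply_image]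
      rfl

lemma cycleType_sumCongr (p : Perm α) (q : Perm β) :
    Equiv.Perm.cycleType (Equiv.sumCongr p q : Perm (α ⊕ β)) = p.cycleType + q.cycleType := by
  have hmul : (Equiv.sumCongr p q : Perm (α ⊕ β))
      = Equiv.sumCongr p (1 : Perm β) * Equiv.sumCongr (1 : Perm α) q := by
    rw [Equiv.Perm.sumCongr_mul]; simp
  have hdisj : Equiv.Perm.Disjoint (Equiv.sumCongr p (1 : Perm β)) (Equiv.sumCongr (1 : Perm α) q) := by
    intro x
    cases x with
    | inl a => right; rfl
    | inr b => left; rfl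
  rw [hmul, hdisj.cycleType_mul, sumCongr_left_eq_extend, sumCongr_right_eq_extend,
    Equiv.Perm.cycleType_extendDomain, Equiv.Perm.cycleType_extendDomain]

lemma fixcount_sumCongr (p : Perm α) (q : Perm β) :
    (Finset.univ.filter fun x : α ⊕ β => Equiv.sumCongr p q x = x).card
      = (Finset.univ.filter fun a : α => p a = a).card
        + (Finset.univ.filter fun b : β => q b = b).card := by
  classical
  rw [← Fintype.card_subtype, ← Fintype.card_subtype, ← Fintype.card_subtype]
  rw [← Fintype.card_sum]
  apply Fintype.card_congr
  refine (Equiv.subtypeSum (p := fun x : α ⊕ β => Equiv.sumCongr p q x = x)).trans ?_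
  refine Equiv.sumCongr (Equiv.subtypeEquivRight ?_) (Equiv.subtypeEquivRight ?_) <;>
    intro x <;> simp

lemma Cyc_sumCongr (p : Perm α) (q : Perm β) :
    Cyc (Equiv.sumCongr p q : Perm (α ⊕ β)) = Cyc p + Cyc q := by
  unfold Cyc
  rw [cycleType_sumCongr, fixcount_sumCongr, Multiset.card_add]
  ring

lemma Cyc_finRotate {s : ℕ} (hs : 1 ≤ s) : Cyc (finRotate s) = 1 := by
  unfold Cyc
  match s, hs with
  | 1, _ =>
      rw [finRotate_one]
      show Multiset.card (Equiv.Perm.cycleType (1 : Perm (Fin 1))) + _ = 1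
      rw [Equiv.Perm.cycleType_one]
      simp
  | (n+2), _ =>
      rw [cycleType_finRotate]
      have : (Finset.univ.filter fun x : Fin (n+2) => finRotate (n+2) x = x) = ∅ := by
        ext x
        simp only [Finset.mem_filter, Finset.mem_univ, true_and, Finset.notMem_empty,
          iff_false]
        have := support_finRotate (n := n)
        intro hx
        have : x ∈ (finRotate (n+2)).support := this ▸ Finset.mem_univ x
        exact (Equiv.Perm.mem_support.mp this) hx
      rw [this]
      simp

open Fin.NatCast in
lemma finRotate_pow_apply {t : ℕ} (k : ℕ) (x : Fin (t+1)) :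
    ((finRotate (t+1)) ^ k) x = x + (k : Fin (t+1)) := by
  induction k with
  | zero => simp
  | succ k ih =>
      rw [pow_succ', Equiv.Perm.mul_apply, ih, finRotate_succ_apply]
      push_cast
      rw [add_assoc]

lemma sameCycle_finRotate {s : ℕ} (x y : Fin s) : (finRotate s).SameCycle x y := by
  match s with
  | 0 => exact absurd x.2 (by omega)
  | 1 =>
      have : x = y := Subsingleton.elim x y
      rw [this]
  | (n+2) =>
      refine isCycle_finRotate.sameCycle ?_ ?_ <;>
      · rw [← Equiv.Perm.mem_support, support_finRotate]
        exact Finset.mem_univ _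

open Fin.NatCast in
/-- centralizer of finRotate consists of its powers -/
lemma commute_finRotate {t : ℕ} (q : Perm (Fin (t+1)))
    (hq : Commute q (finRotate (t+1))) :
    q = (finRotate (t+1)) ^ ((q 0 : Fin (t+1)) : ℕ) := by
  refine Equiv.ext fun x => ?_
  obtain ⟨k, hk⟩ := sameCycle_finRotate (0 : Fin (t+1)) x
  have hcomm : ∀ i : ℤ, q * (finRotate (t+1)) ^ i = (finRotate (t+1)) ^ i * q :=
    fun i => (hq.zpow_right i).eq
  calc q x = q (((finRotate (t+1)) ^ k) 0) := by rw [hk]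
    _ = ((finRotate (t+1)) ^ k) (q 0) := by
        rw [← Equiv.Perm.mul_apply, hcomm, Equiv.Perm.mul_apply]
    _ = ((finRotate (t+1)) ^ k) (((finRotate (t+1)) ^ ((q 0 : Fin (t+1)) : ℕ)) 0) := by
        rw [finRotate_pow_apply, zero_add, Fin.cast_val_eq_self]
    _ = ((finRotate (t+1)) ^ ((q 0 : Fin (t+1)) : ℕ)) (((finRotate (t+1)) ^ k) 0) := by
        rw [← Equiv.Perm.mul_apply, ← Equiv.Perm.mul_apply, ← zpow_natCast, ← zpow_add,
          ← zpow_add, add_comm k]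
    _ = ((finRotate (t+1)) ^ ((q 0 : Fin (t+1)) : ℕ)) x := by rw [hk]

end HM
-- === chunk 3 ===
namespace HM
open Sum Subgroup
variable {α β γ : Type*} [DecidableEq α] [Fintype α] [DecidableEq β] [Fintype β]
  [DecidableEq γ] [Fintype γ]

/-- the standard two-cycle permutation on a sum of two Fins -/
def xi0 (a b : ℕ) : Perm (Fin a ⊕ Fin b) := Equiv.sumCongr (finRotate a) (finRotate b)

lemma sumCongr_zpow (p : Perm α) (q : Perm β) (k : ℤ) :
    (Equiv.sumCongr p q : Perm (α ⊕ β)) ^ k = Equiv.sumCongr (p ^ k) (q ^ k) := by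
  have h := map_zpow (Equiv.Perm.sumCongrHom α β) (p, q) k
  simp only [Equiv.Perm.sumCongrHom_apply] at h
  rw [← h]
  simp [Prod.pow_def]

lemma sameCycle_xi0_inl {a b : ℕ} (i j : Fin a) :
    (xi0 a b).SameCycle (inl i) (inl j) := by
  obtain ⟨k, hk⟩ := sameCycle_finRotate (s := a) i j
  exact ⟨k, by rw [xi0, sumCongr_zpow]; simp [hk]⟩

lemma sameCycle_xi0_inr {a b : ℕ} (i j : Fin b) :
    (xi0 a b).SameCycle (inr i) (inr j) := by
  obtain ⟨k, hk⟩ := sameCycle_finRotate (s := b) i j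
  exact ⟨k, by rw [xi0, sumCongr_zpow]; simp [hk]⟩

lemma not_sameCycle_xi0_inl_inr {a b : ℕ} (i : Fin a) (j : Fin b) :
    ¬ (xi0 a b).SameCycle (inl i) (inr j) := by
  rintro ⟨k, hk⟩
  rw [xi0, sumCongr_zpow] at hk
  simp at hk

/-- size of the orbit of a point under a permutation -/
def orbSize (g : Perm γ) (x : γ) : ℕ := (Finset.univ.filter fun y => g.SameCycle x y).card

lemma sameCycle_pCongr (e : α ≃ β) (g : Perm α) (x y : α) :
    (pCongr e g).SameCycle (e x) (e y) ↔ g.SameCycle x y := by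
  constructor
  · rintro ⟨k, hk⟩
    refine ⟨k, e.injective ?_⟩
    have h2 : (pCongr e) (g ^ k) (e x) = e y := by rw [map_zpow]; exact hk
    simpa only [pCongr_apply, Equiv.symm_apply_apply] using h2
  · rintro ⟨k, hk⟩
    refine ⟨k, ?_⟩
    rw [← map_zpow (pCongr e)]
    show e ((g ^ k) (e.symm (e x))) = e y
    rw [Equiv.symm_apply_apply, hk]

lemma orbSize_pCongr (e : α ≃ β) (g : Perm α) (x : α) :
    orbSize (pCongr e g) (e x) = orbSize g x := by
  apply Finset.card_bij (fun y _ => e.symm y)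
  · intro y hy
    simp only [Finset.mem_filter, Finset.mem_univ, true_and] at hy ⊢
    rw [← sameCycle_pCongr e g]
    simpa using hy
  · intro y₁ h₁ y₂ h₂ h
    exact e.symm.injective h
  · intro y hy
    simp only [Finset.mem_filter, Finset.mem_univ, true_and] at hy
    refine ⟨e y, ?_, by simp⟩
    simp only [Finset.mem_filter, Finset.mem_univ, true_and]
    exact (sameCycle_pCongr e g x y).mpr hy

lemma conj_eq_pCongr (g τ : Perm α) : τ * g * τ⁻¹ = pCongr (τ : Perm α) g := by
  ext x; simp [Equiv.Perm.mul_apply, pCongr_apply, ← Equiv.Perm.inv_def]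

lemma orbSize_conj (g τ : Perm α) (x : α) : orbSize (τ * g * τ⁻¹) (τ x) = orbSize g x := by
  rw [conj_eq_pCongr]; exact orbSize_pCongr τ g x

lemma orbSize_xi0_inl {a b : ℕ} (i : Fin a) : orbSize (xi0 a b) (inl i) = a := by
  unfold orbSize
  have : (Finset.univ.filter fun y => (xi0 a b).SameCycle (inl i) y)
      = Finset.univ.image (inl : Fin a → Fin a ⊕ Fin b) := by
    ext y
    cases y with
    | inl j => simp [sameCycle_xi0_inl i j]
    | inr j => simp [not_sameCycle_xi0_inl_inr i j]
  rw [this, Finset.card_image_of_injective _ Sum.inl_injective]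
  simp

lemma orbSize_xi0_inr {a b : ℕ} (j : Fin b) : orbSize (xi0 a b) (inr j) = b := by
  unfold orbSize
  have : (Finset.univ.filter fun y => (xi0 a b).SameCycle (inr j) y)
      = Finset.univ.image (inr : Fin b → Fin a ⊕ Fin b) := by
    ext y
    cases y with
    | inl i =>
        have hn : ¬(xi0 a b).SameCycle (inr j) (inl i) :=
          fun h => not_sameCycle_xi0_inl_inr i j h.symm
        simp [hn]
    | inr i => simp [sameCycle_xi0_inr j i]
  rw [this, Finset.card_image_of_injective _ Sum.inr_injective]
  simp

lemma orbSize_pos (g : Perm γ) (x : γ) : 1 ≤ orbSize g x := by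
  rw [orbSize]
  exact Finset.card_pos.mpr ⟨x, by simp [Equiv.Perm.SameCycle.refl]⟩

/-- stabilizer of a transitive pair which fixes a point is trivial -/
lemma stab_trivial (f σ τ : Perm γ) (x0 : γ) (h0 : τ x0 = x0)
    (hf : Commute τ f) (hs : Commute τ σ)
    (htr : ∀ x y : γ, ∃ g ∈ Subgroup.closure {f, σ}, g x = y) : τ = 1 := by
  have hcent : Subgroup.closure {f, σ} ≤ Subgroup.centralizer {τ} := by
    rw [Subgroup.closure_le]
    rintro g hg
    rw [SetLike.mem_coe, Subgroup.mem_centralizer_iff]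
    rintro h rfl
    rcases hg with rfl | rfl
    · exact hf
    · exact hs
  refine Equiv.ext fun x => ?_
  obtain ⟨g, hg, hgx⟩ := htr x0 x
  have hcomm : τ * g = g * τ := (Subgroup.mem_centralizer_iff.mp (hcent hg)) τ rfl
  calc τ x = τ (g x0) := by rw [hgx]
    _ = (τ * g) x0 := rfl
    _ = (g * τ) x0 := by rw [hcomm]
    _ = g x0 := by rw [Equiv.Perm.mul_apply, h0]
    _ = x := hgx

lemma conj_mem_closure_pair {f σ τ g : Perm γ} (hg : g ∈ Subgroup.closure {f, σ}) :
    τ * g * τ⁻¹ ∈ Subgroup.closure {τ * f * τ⁻¹, τ * σ * τ⁻¹} := by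
  have h1 : ((MulAut.conj τ).toMonoidHom : Perm γ →* Perm γ) g ∈
      Subgroup.map (MulAut.conj τ).toMonoidHom (Subgroup.closure {f, σ}) :=
    Subgroup.mem_map_of_mem _ hg
  rw [MonoidHom.map_closure, Set.image_pair] at h1
  simpa using h1

lemma trans_conj {f σ : Perm γ} (τ : Perm γ)
    (htr : ∀ x y : γ, ∃ g ∈ Subgroup.closure {f, σ}, g x = y) :
    ∀ x y : γ, ∃ g ∈ Subgroup.closure {τ * f * τ⁻¹, τ * σ * τ⁻¹}, g x = y := by
  intro x y
  obtain ⟨g, hg, hgx⟩ := htr (τ⁻¹ x) (τ⁻¹ y)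
  refine ⟨τ * g * τ⁻¹, conj_mem_closure_pair hg, ?_⟩
  simp only [Equiv.Perm.mul_apply, hgx]
  simp

lemma pCongr_symm_pCongr (e : α ≃ β) (f : Perm α) : (pCongr e).symm (pCongr e f) = f :=
  (pCongr e).symm_apply_apply f

lemma pCongr_symm_pCongr' (e : α ≃ β) (f : Perm α) : pCongr e.symm (pCongr e f) = f := by
  ext x; simp

lemma trans_pCongr (e : α ≃ β) (f σ : Perm α)
    (htr : ∀ x y : α, ∃ g ∈ Subgroup.closure {f, σ}, g x = y) :
    ∀ x y : β, ∃ g ∈ Subgroup.closure {pCongr e f, pCongr e σ}, g x = y := by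
  intro x y
  obtain ⟨g, hg, hgx⟩ := htr (e.symm x) (e.symm y)
  have h1 : (pCongr e) g ∈ Subgroup.map (pCongr e).toMonoidHom (Subgroup.closure {f, σ}) :=
    Subgroup.mem_map_of_mem _ hg
  rw [MonoidHom.map_closure, Set.image_pair] at h1
  refine ⟨pCongr e g, by simpa using h1, ?_⟩
  simp only [pCongr_apply, Equiv.symm_apply_apply, hgx]
  simp

lemma trans_pCongr_iff (e : α ≃ β) (f σ : Perm α) :
    (∀ x y : β, ∃ g ∈ Subgroup.closure {pCongr e f, pCongr e σ}, g x = y)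
      ↔ (∀ x y : α, ∃ g ∈ Subgroup.closure {f, σ}, g x = y) := by
  constructor
  · intro h
    have := trans_pCongr e.symm (pCongr e f) (pCongr e σ) h
    simpa only [pCongr_symm_pCongr'] using this
  · exact trans_pCongr e f σ

end HM
-- === chunk 4 : transitivity iff not block-preserving ===
namespace HM
open Sum Subgroup

lemma trans_iff_not_NT {a b : ℕ} (ha : 1 ≤ a) (hb : 1 ≤ b) (σ : Perm (Fin a ⊕ Fin b)) :
    (∀ x y, ∃ g ∈ Subgroup.closure {xi0 a b, σ}, g x = y)
      ↔ ¬ (∀ i : Fin a, ∃ i', σ (inl i) = inl i') := by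
  classical
  have hξmem : xi0 a b ∈ ({xi0 a b, σ} : Set (Perm (Fin a ⊕ Fin b))) := Set.mem_insert _ _
  have hσmem : σ ∈ ({xi0 a b, σ} : Set (Perm (Fin a ⊕ Fin b))) :=
    Set.mem_insert_of_mem _ rfl
  constructor
  · intro htr hNT
    set L : Finset (Fin a ⊕ Fin b) := Finset.univ.image inl with hLdef
    have hmem : ∀ x, x ∈ L ↔ ∃ i, x = inl i := by
      intro x; simp [hLdef, eq_comm]
    have hstep : ∀ g ∈ Subgroup.closure {xi0 a b, σ}, ∀ x ∈ L, g x ∈ L := by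
      intro g hg
      induction hg using Subgroup.closure_induction with
      | mem g hgk =>
          rcases hgk with rfl | rfl
          · intro x hx
            obtain ⟨i, rfl⟩ := (hmem x).mp hx
            exact (hmem _).mpr ⟨finRotate a i, rfl⟩
          · intro x hx
            obtain ⟨i, rfl⟩ := (hmem x).mp hx
            obtain ⟨i', hi'⟩ := hNT i
            rw [hi']
            exact (hmem _).mpr ⟨i', rfl⟩
      | one => intro x hx; simpa using hx
      | mul g1 g2 _ _ h1 h2 =>
          intro x hx
          rw [Equiv.Perm.mul_apply]
          exact h1 _ (h2 _ hx)
      | inv g _ hgL =>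
          intro x hx
          have himg : L.image g = L := by
            apply Finset.eq_of_subset_of_card_le
            · intro y hy
              obtain ⟨z, hz, rfl⟩ := Finset.mem_image.mp hy
              exact hgL z hz
            · rw [Finset.card_image_of_injective _ g.injective]
          rw [← himg] at hx
          obtain ⟨z, hz, hzx⟩ := Finset.mem_image.mp hx
          have : g⁻¹ x = z := by rw [← hzx]; simp
          rwa [this]
    obtain ⟨g, hg, hgx⟩ := htr (inl ⟨0, ha⟩) (inr ⟨0, hb⟩)
    have h1 : (inl ⟨0, ha⟩ : Fin a ⊕ Fin b) ∈ L := (hmem _).mpr ⟨_, rfl⟩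
    have h2 := hstep g hg _ h1
    rw [hgx] at h2
    obtain ⟨i, hi⟩ := (hmem _).mp h2
    cases hi
  · intro hNT x y
    push_neg at hNT
    obtain ⟨i0, hi0⟩ := hNT
    obtain ⟨j0, hj0⟩ : ∃ j0, σ (inl i0) = inr j0 := by
      cases h : σ (inl i0) with
      | inl i' => exact absurd h (hi0 i')
      | inr j => exact ⟨j, rfl⟩
    have key : ∀ y, ∃ g ∈ Subgroup.closure {xi0 a b, σ}, g (inl ⟨0, ha⟩) = y := by
      intro y
      cases y with
      | inl i =>
          obtain ⟨k, hk⟩ := sameCycle_xi0_inl (b := b) ⟨0, ha⟩ i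
          exact ⟨(xi0 a b) ^ k, zpow_mem (Subgroup.subset_closure hξmem) k, hk⟩
      | inr j =>
          obtain ⟨k1, hk1⟩ := sameCycle_xi0_inl (b := b) ⟨0, ha⟩ i0
          obtain ⟨k2, hk2⟩ := sameCycle_xi0_inr (a := a) j0 j
          refine ⟨(xi0 a b) ^ k2 * σ * (xi0 a b) ^ k1, ?_, ?_⟩
          · exact mul_mem (mul_mem (zpow_mem (Subgroup.subset_closure hξmem) k2)
              (Subgroup.subset_closure hσmem)) (zpow_mem (Subgroup.subset_closure hξmem) k1)
          · rw [Equiv.Perm.mul_apply, Equiv.Perm.mul_apply, hk1, hj0, hk2]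
    obtain ⟨gx, hgx, hgx0⟩ := key x
    obtain ⟨gy, hgy, hgy0⟩ := key y
    refine ⟨gy * gx⁻¹, mul_mem hgy (inv_mem hgx), ?_⟩
    have : gx⁻¹ x = inl ⟨0, ha⟩ := by rw [← hgx0]; simp
    rw [Equiv.Perm.mul_apply, this, hgy0]

end HM
-- === chunk 5 ===
namespace HM
open Sum Subgroup

lemma commute_xi0_fix_classify {a b : ℕ} (ha : 1 ≤ a) (τ : Perm (Fin a ⊕ Fin b))
    (h0 : τ (inl ⟨0, ha⟩) = inl ⟨0, ha⟩) (hc : Commute τ (xi0 a b)) :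
    ∀ i : Fin a, τ (inl i) = inl i := by
  intro i
  obtain ⟨k, hk⟩ := sameCycle_xi0_inl (b := b) ⟨0, ha⟩ i
  calc τ (inl i) = τ ((xi0 a b ^ k) (inl ⟨0, ha⟩)) := by rw [hk]
    _ = (τ * xi0 a b ^ k) (inl ⟨0, ha⟩) := rfl
    _ = (xi0 a b ^ k * τ) (inl ⟨0, ha⟩) := by rw [(hc.zpow_right k).eq]
    _ = (xi0 a b ^ k) (inl ⟨0, ha⟩) := by rw [Equiv.Perm.mul_apply, h0]
    _ = inl i := hk

lemma commute_xi0_classify {a b : ℕ} (ha : 1 ≤ a) (hb : 1 ≤ b) (τ : Perm (Fin a ⊕ Fin b))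
    (h0 : τ (inl ⟨0, ha⟩) = inl ⟨0, ha⟩) (hc : Commute τ (xi0 a b)) :
    ∃ j : ℕ, j < b ∧ τ = (Equiv.sumCongr (1 : Perm (Fin a)) (finRotate b)) ^ j := by
  have hinl := commute_xi0_fix_classify ha τ h0 hc
  have hrange : τ ∈ (Equiv.Perm.sumCongrHom (Fin a) (Fin b)).range := by
    apply Equiv.Perm.mem_sumCongrHom_range_of_perm_mapsTo_inl
    rintro x ⟨i, rfl⟩
    exact ⟨i, (hinl i).symm⟩
  obtain ⟨⟨p, q⟩, hpq⟩ := hrange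
  simp only [Equiv.Perm.sumCongrHom_apply] at hpq
  have hp : p = 1 := by
    refine Equiv.ext fun i => ?_
    have h := hinl i
    rw [← hpq] at h
    simpa using h
  subst hp
  have hqc : Commute q (finRotate b) := by
    have h := hc
    rw [← hpq] at h
    have h2 : ∀ j : Fin b, (q * finRotate b) j = (finRotate b * q) j := by
      intro j
      have h3 := Equiv.congr_fun h.eq (inr j)
      simpa [xi0, Equiv.Perm.mul_apply] using h3
    exact Equiv.ext h2
  obtain ⟨t, rfl⟩ : ∃ t, b = t + 1 := ⟨b - 1, by omega⟩
  have hq := commute_finRotate q hqc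
  refine ⟨((q 0 : Fin (t+1)) : ℕ), (q 0).2, ?_⟩
  have hpow := map_pow (Equiv.Perm.sumCongrHom (Fin a) (Fin (t+1)))
    ((1 : Perm (Fin a)), finRotate (t+1)) ((q 0 : Fin (t+1)) : ℕ)
  simp only [Equiv.Perm.sumCongrHom_apply, Prod.pow_def, one_pow] at hpow
  rw [← hpq, ← hpow]
  exact congrArg (fun x => Equiv.sumCongr (1 : Perm (Fin a)) x) hq

lemma swap_exists {a b : ℕ} (h : a = b) (ha : 1 ≤ a) (hb : 1 ≤ b) :
    ∃ s : Perm (Fin a ⊕ Fin b), Commute s (xi0 a b) ∧ s (inl ⟨0, ha⟩) = inr ⟨0, hb⟩ := by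
  subst h
  refine ⟨Equiv.sumComm (Fin a) (Fin a), ?_, rfl⟩
  show _ = _
  refine Equiv.ext fun x => ?_
  cases x <;> rfl

lemma Pone_eq (s : ℕ) (m n : ℤ) :
    Pone s m n = ∑ σ : Perm (Fin s), (m : ℚ) ^ Cyc σ * (n : ℚ) ^ Cyc (finRotate s * σ) := rfl

lemma xiab_eq (a b : ℕ) : xiab a b = pCongr finSumFinEquiv (xi0 a b) := rfl

lemma Ptwo_eq (a b : ℕ) (m n : ℤ) :
    Ptwo a b m n
      = ∑ σ : Perm (Fin a ⊕ Fin b), (m : ℚ) ^ Cyc σ * (n : ℚ) ^ Cyc (xi0 a b * σ) := by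
  rw [Ptwo]
  refine (Fintype.sum_equiv (pCongr (finSumFinEquiv (m := a) (n := b))).toEquiv _ _ ?_).symm
  intro σ
  have h1 : xiab a b * (pCongr finSumFinEquiv) σ = pCongr finSumFinEquiv (xi0 a b * σ) := by
    rw [xiab_eq, ← map_mul]
  show (m : ℚ) ^ Cyc σ * (n : ℚ) ^ Cyc (xi0 a b * σ)
      = (m : ℚ) ^ cyc (pCongr finSumFinEquiv σ) * (n : ℚ) ^ cyc (xiab a b * pCongr finSumFinEquiv σ)
  rw [h1, cyc_eq_Cyc, cyc_eq_Cyc, Cyc_pCongr, Cyc_pCongr]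

lemma NT_sum {a b : ℕ} (m n : ℤ) :
    ∑ σ ∈ Finset.univ.filter
        (fun σ : Perm (Fin a ⊕ Fin b) => ∀ i : Fin a, ∃ i', σ (inl i) = inl i'),
      (m : ℚ) ^ Cyc σ * (n : ℚ) ^ Cyc (xi0 a b * σ)
    = Pone a m n * Pone b m n := by
  classical
  rw [Pone_eq, Pone_eq, Finset.sum_mul_sum]
  have hprod : (∑ pq : Perm (Fin a) × Perm (Fin b),
      ((m : ℚ) ^ Cyc pq.1 * (n : ℚ) ^ Cyc (finRotate a * pq.1))
        * ((m : ℚ) ^ Cyc pq.2 * (n : ℚ) ^ Cyc (finRotate b * pq.2)))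
      = ∑ p : Perm (Fin a), ∑ q : Perm (Fin b),
        ((m : ℚ) ^ Cyc p * (n : ℚ) ^ Cyc (finRotate a * p))
          * ((m : ℚ) ^ Cyc q * (n : ℚ) ^ Cyc (finRotate b * q)) :=
    Fintype.sum_prod_type _
  rw [← hprod]
  symm
  refine Finset.sum_bij (fun pq _ => Equiv.sumCongr pq.1 pq.2) ?_ ?_ ?_ ?_
  · intro pq _
    simp only [Finset.mem_filter, Finset.mem_univ, true_and]
    intro i
    exact ⟨pq.1 i, rfl⟩
  · intro p1 _ p2 _ h
    exact Equiv.Perm.sumCongrHom_injective h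
  · intro σ hσ
    simp only [Finset.mem_filter, Finset.mem_univ, true_and] at hσ
    have hmt : Set.MapsTo σ (Set.range Sum.inl) (Set.range Sum.inl) := by
      rintro x ⟨i, rfl⟩
      obtain ⟨i', hi'⟩ := hσ i
      exact ⟨i', hi'.symm⟩
    obtain ⟨⟨p, q⟩, hpq⟩ := Equiv.Perm.mem_sumCongrHom_range_of_perm_mapsTo_inl hmt
    exact ⟨(p, q), Finset.mem_univ _, hpq⟩
  · intro pq _
    have hmul : xi0 a b * Equiv.sumCongr pq.1 pq.2
        = Equiv.sumCongr (finRotate a * pq.1) (finRotate b * pq.2) :=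
      Equiv.Perm.sumCongr_mul _ _ _ _
    rw [hmul, Cyc_sumCongr, Cyc_sumCongr, pow_add, pow_add]
    ring

lemma TS_sum {a b : ℕ} (ha : 1 ≤ a) (hb : 1 ≤ b) (m n : ℤ)
    [inst : DecidablePred fun σ : Perm (Fin a ⊕ Fin b) =>
       ∀ x y, ∃ g ∈ Subgroup.closure {xi0 a b, σ}, g x = y] :
    ∑ σ ∈ Finset.univ.filter (fun σ : Perm (Fin a ⊕ Fin b) =>
        ∀ x y, ∃ g ∈ Subgroup.closure {xi0 a b, σ}, g x = y),
      (m : ℚ) ^ Cyc σ * (n : ℚ) ^ Cyc (xi0 a b * σ)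
    = Ptwo a b m n - Pone a m n * Pone b m n := by
  classical
  have hfil : Finset.univ.filter (fun σ : Perm (Fin a ⊕ Fin b) =>
        ∀ x y, ∃ g ∈ Subgroup.closure {xi0 a b, σ}, g x = y)
      = Finset.univ.filter (fun σ : Perm (Fin a ⊕ Fin b) =>
        ¬ (∀ i : Fin a, ∃ i', σ (inl i) = inl i')) := by
    apply Finset.filter_congr
    intro σ _
    exact trans_iff_not_NT ha hb σ
  rw [hfil]
  have hsplit := Finset.sum_filter_add_sum_filter_not Finset.univ
    (fun σ : Perm (Fin a ⊕ Fin b) => ∀ i : Fin a, ∃ i', σ (inl i) = inl i')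
    (fun σ => (m : ℚ) ^ Cyc σ * (n : ℚ) ^ Cyc (xi0 a b * σ))
  rw [NT_sum m n] at hsplit
  rw [Ptwo_eq]
  linarith [hsplit]

end HM
-- === chunk 6 : orbit sizes vs cycle types, conjugator existence ===
namespace HM
open Sum Subgroup
variable {γ : Type*} [DecidableEq γ] [Fintype γ]

lemma orbSize_eq_one_of_fixed {g : Perm γ} {x : γ} (hg : g x = x) : orbSize g x = 1 := by
  rw [orbSize]
  have : (Finset.univ.filter fun y => g.SameCycle x y) = {x} := by
    ext y
    simp only [Finset.mem_filter, Finset.mem_univ, true_and, Finset.mem_singleton]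
    constructor
    · rintro ⟨k, hk⟩
      rw [Equiv.Perm.zpow_apply_eq_self_of_apply_eq_self hg k] at hk
      exact hk.symm
    · rintro rfl
      exact ⟨0, rfl⟩
  rw [this, Finset.card_singleton]

lemma not_fixed_of_orbSize_ne_one {g : Perm γ} {x : γ} (h : orbSize g x ≠ 1) : g x ≠ x :=
  fun hg => h (orbSize_eq_one_of_fixed hg)

lemma fixed_of_orbSize_eq_one {g : Perm γ} {x : γ} (h : orbSize g x = 1) : g x = x := by
  by_contra hg
  have hx : x ∈ Finset.univ.filter fun y => g.SameCycle x y := by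
    simp [Equiv.Perm.SameCycle.refl]
  have hsing := Finset.card_eq_one.mp h
  obtain ⟨z, hz⟩ := hsing
  rw [hz] at hx
  have hgx : g x ∈ Finset.univ.filter fun y => g.SameCycle x y := by
    simp only [Finset.mem_filter, Finset.mem_univ, true_and]
    exact ⟨1, by simp⟩
  rw [hz] at hgx
  simp only [Finset.mem_singleton] at hx hgx
  exact hg (by rw [hgx, hx])

lemma orbSize_of_not_fixed {g : Perm γ} {x : γ} (hx : g x ≠ x) :
    orbSize g x = (g.cycleOf x).support.card ∧ orbSize g x ∈ g.cycleType := by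
  have hsupp : (g.cycleOf x).support = Finset.univ.filter fun y => g.SameCycle x y := by
    ext y
    simp only [Finset.mem_filter, Finset.mem_univ, true_and]
    rw [Equiv.Perm.mem_support_cycleOf_iff]
    constructor
    · exact fun h => h.1
    · exact fun h => ⟨h, Equiv.Perm.mem_support.mpr hx⟩
  have h1 : orbSize g x = (g.cycleOf x).support.card := by rw [orbSize, hsupp]
  refine ⟨h1, ?_⟩
  rw [Equiv.Perm.cycleType_def, h1]
  apply Multiset.mem_map_of_mem
  rw [Finset.mem_val]
  exact (Equiv.Perm.cycleOf_mem_cycleFactorsFinset_iff).mpr (Equiv.Perm.mem_support.mpr hx)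

lemma fixcount_add_support_card (g : Perm γ) :
    (Finset.univ.filter fun x => g x = x).card + g.support.card = Fintype.card γ := by
  classical
  have h := Finset.card_filter_add_card_filter_not
    (s := (Finset.univ : Finset γ)) (p := fun x => g x = x)
  rw [Finset.card_univ] at h
  have h2 : g.support = Finset.univ.filter (fun x => ¬ (g x = x)) := by
    ext x; simp [Equiv.Perm.mem_support]
  rw [h2]
  convert h using 2

lemma cycleType_refl {δ : Type*} [DecidableEq δ] [Fintype δ] :
    Equiv.Perm.cycleType (Equiv.refl δ) = 0 := Equiv.Perm.cycleType_one

lemma cycleType_finRotate_one : Equiv.Perm.cycleType (finRotate 1) = 0 := by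
  rw [finRotate_one]; exact cycleType_refl

lemma cycleType_rot {s : ℕ} (hs : 2 ≤ s) :
    Equiv.Perm.cycleType (finRotate s) = {s} := cycleType_finRotate_of_le hs

/-- main conjugator existence lemma -/
lemma conj_exists {a b : ℕ} (ha : 1 ≤ a) (hb : 1 ≤ b)
    (e : (Fin a ⊕ Fin b) ≃ γ) (f : Perm γ) (hcyc : Cyc f = 2)
    (horb : orbSize f (e (inl ⟨0, ha⟩)) = a) :
    ∃ τ : Perm γ, τ (e (inl ⟨0, ha⟩)) = e (inl ⟨0, ha⟩)
      ∧ τ * (pCongr e (xi0 a b)) * τ⁻¹ = f := by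
  classical
  set x₀ := e (inl ⟨0, ha⟩) with hx₀
  set ξ := pCongr e (xi0 a b) with hξ
  have hcard : Fintype.card γ = a + b := by
    rw [← Fintype.card_congr e]
    simp
  -- Step A : cycle types agree
  have hctxi : Equiv.Perm.cycleType (xi0 a b)
      = Equiv.Perm.cycleType (finRotate a) + Equiv.Perm.cycleType (finRotate b) :=
    cycleType_sumCongr _ _
  have hstepA : Equiv.Perm.cycleType ξ = f.cycleType := by
    rw [hξ, cycleType_pCongr, hctxi]
    have h2 : Multiset.card f.cycleType + (Finset.univ.filter fun x => f x = x).card = 2 := hcyc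
    have hsum : f.cycleType.sum = f.support.card := Equiv.Perm.sum_cycleType f
    have hfix := fixcount_add_support_card f
    have hub : Multiset.card f.cycleType ≤ 2 := by omega
    interval_cases hcc : (Multiset.card f.cycleType)
    · -- c = 0 : f = 1
      have hf1 : f = 1 := Equiv.Perm.card_cycleType_eq_zero.mp hcc
      have hk2 : (Finset.univ.filter fun x => f x = x).card = 2 := by omega
      have hfixall : (Finset.univ.filter fun x => f x = x) = Finset.univ := by
        rw [hf1]; simp
      have hcard2 : a + b = 2 := by
        rw [← hcard, ← Finset.card_univ, ← hfixall, hk2]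
      have ha1 : a = 1 := by
        have := horb
        rw [orbSize_eq_one_of_fixed (by rw [hf1]; rfl)] at this
        omega
      have hb1 : b = 1 := by omega
      subst ha1; subst hb1
      rw [hf1, Equiv.Perm.cycleType_one, cycleType_finRotate_one]
      simp
    · -- c = 1 : f is a cycle
      have hfc : f.IsCycle := Equiv.Perm.card_cycleType_eq_one.mp hcc
      have hk1 : (Finset.univ.filter fun x => f x = x).card = 1 := by omega
      have hsc : f.support.card = a + b - 1 := by omega
      have hct : f.cycleType = {f.support.card} := by
        rw [hfc.cycleType]
      by_cases hfx : f x₀ = x₀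
      · have ha1 : a = 1 := by rw [← horb, orbSize_eq_one_of_fixed hfx]
        have hb2 : 2 ≤ b := by
          have := hfc.two_le_card_support
          omega
        have hbv : f.support.card = b := by omega
        rw [hct, hbv, ha1, cycleType_finRotate_one, cycleType_rot hb2]
        simp
      · obtain ⟨ho1, _⟩ := orbSize_of_not_fixed hfx
        have hcyceq : f.cycleOf x₀ = f := hfc.cycleOf_eq hfx
        have hav : a = f.support.card := by rw [← horb, ho1, hcyceq]
        have hb1 : b = 1 := by
          have := hfc.two_le_card_support
          omega
        have ha2 : 2 ≤ a := by
          have := hfc.two_le_card_support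
          omega
        rw [hct, ← hav, hb1, cycleType_finRotate_one, cycleType_rot ha2]
        simp
    · -- c = 2
      have hk0 : (Finset.univ.filter fun x => f x = x).card = 0 := by omega
      have hfx : f x₀ ≠ x₀ := by
        intro hfix
        have : x₀ ∈ Finset.univ.filter fun x => f x = x := by simp [hfix]
        rw [Finset.card_eq_zero.mp hk0] at this
        exact absurd this (Finset.notMem_empty _)
      obtain ⟨ho1, ho2⟩ := orbSize_of_not_fixed hfx
      rw [horb] at ho2
      have hsc : f.support.card = a + b := by omega
      obtain ⟨T, hT⟩ := Multiset.exists_cons_of_mem ho2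
      have hcT : Multiset.card T = 1 := by
        have := congrArg Multiset.card hT
        simp at this
        omega
      obtain ⟨y, hy⟩ := Multiset.card_eq_one.mp hcT
      have hysum : a + y = a + b := by
        have := hsum
        rw [hT, hy] at this
        simpa [hsc] using this
      have hyb : y = b := by omega
      have ha2 : 2 ≤ a := Equiv.Perm.two_le_of_mem_cycleType ho2
      have hb2 : 2 ≤ b := by
        refine Equiv.Perm.two_le_of_mem_cycleType (σ := f) ?_
        rw [hT, hy, hyb]
        exact Multiset.mem_cons_of_mem (Multiset.mem_singleton_self b)
      rw [hT, hy, hyb, cycleType_rot ha2, cycleType_rot hb2]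
      rfl
  -- Step B : conjugacy
  have hconj : IsConj ξ f := Equiv.Perm.isConj_iff_cycleType_eq.mpr hstepA
  obtain ⟨c, hc⟩ := isConj_iff.mp hconj
  -- Step C : fix the root
  set z := c⁻¹ x₀ with hz
  have hcz : c z = x₀ := by rw [hz]; simp
  have horbz : orbSize ξ z = a := by
    have h1 : orbSize (c * ξ * c⁻¹) (c z) = orbSize ξ z := orbSize_conj ξ c z
    rw [hc, hcz, horb] at h1
    exact h1.symm
  have hzz : z = e (e.symm z) := by simp
  cases hes : e.symm z with
  | inl i =>
      have hsc : ξ.SameCycle x₀ z := by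
        rw [hx₀, hzz, hes, hξ]
        exact (sameCycle_pCongr e _ _ _).mpr (sameCycle_xi0_inl _ _)
      obtain ⟨k, hk⟩ := hsc
      refine ⟨c * ξ ^ k, ?_, ?_⟩
      · rw [Equiv.Perm.mul_apply, hk, hcz]
      · calc c * ξ ^ k * ξ * (c * ξ ^ k)⁻¹
            = c * (ξ ^ k * ξ * (ξ ^ k)⁻¹) * c⁻¹ := by group
          _ = c * ξ * c⁻¹ := by
              congr 1
              congr 1
              group
          _ = f := hc
  | inr j =>
      have horbz2 : orbSize ξ z = b := by
        rw [hzz, hes, hξ]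
        rw [orbSize_pCongr e _ _]
        exact orbSize_xi0_inr j
      have hab : a = b := by rw [← horbz, horbz2]
      obtain ⟨s, hs, hs0⟩ := swap_exists hab ha hb
      set s' := pCongr e s with hs'
      have hcs' : Commute s' ξ := by
        rw [hs', hξ]
        exact (hs.map (pCongr e).toMonoidHom : _)
      have hs'x : s' x₀ = e (inr ⟨0, hb⟩) := by
        rw [hs', hx₀]
        show e (s (e.symm (e (inl ⟨0, ha⟩)))) = e (inr ⟨0, hb⟩)
        rw [Equiv.symm_apply_apply, hs0]
      have hsc : ξ.SameCycle (e (inr ⟨0, hb⟩)) z := by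
        rw [hzz, hes, hξ]
        exact (sameCycle_pCongr e _ _ _).mpr (sameCycle_xi0_inr _ _)
      obtain ⟨k, hk⟩ := hsc
      refine ⟨c * ξ ^ k * s', ?_, ?_⟩
      · rw [Equiv.Perm.mul_apply, Equiv.Perm.mul_apply, hs'x, hk, hcz]
      · have h1 : s' * ξ * s'⁻¹ = ξ := by
          rw [hcs'.eq]; group
        calc c * ξ ^ k * s' * ξ * (c * ξ ^ k * s')⁻¹
            = c * ξ ^ k * (s' * ξ * s'⁻¹) * (ξ ^ k)⁻¹ * c⁻¹ := by group
          _ = c * ξ ^ k * ξ * (ξ ^ k)⁻¹ * c⁻¹ := by rw [h1]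
          _ = c * (ξ ^ k * ξ * (ξ ^ k)⁻¹) * c⁻¹ := by group
          _ = c * ξ * c⁻¹ := by
              congr 1
              congr 1
              group
          _ = f := hc

end HM
-- === chunk 7 : rotations of the second block ===
namespace HM
open Sum Subgroup

/-- rotation of the second block -/
def rho (a b : ℕ) (i : ℕ) : Perm (Fin a ⊕ Fin b) :=
  (Equiv.sumCongr (1 : Perm (Fin a)) (finRotate b)) ^ i

lemma rho_eq_sumCongr (a b i : ℕ) :
    rho a b i = Equiv.sumCongr (1 : Perm (Fin a)) ((finRotate b) ^ i) := by
  have hpow := map_pow (Equiv.Perm.sumCongrHom (Fin a) (Fin b))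
    ((1 : Perm (Fin a)), finRotate b) i
  simp only [Equiv.Perm.sumCongrHom_apply, Prod.pow_def, one_pow] at hpow
  rw [rho, ← hpow]

lemma rho_fix_inl (a b i : ℕ) (x : Fin a) : rho a b i (inl x) = inl x := by
  rw [rho_eq_sumCongr]; rfl

lemma rho_commute_xi0 (a b i : ℕ) : Commute (rho a b i) (xi0 a b) := by
  apply Commute.pow_left
  show _ = _
  rw [xi0, Equiv.Perm.sumCongr_mul, Equiv.Perm.sumCongr_mul, one_mul, mul_one]

open Fin.NatCast in
lemma rho_apply_inr_zero {a t : ℕ} (i : ℕ) :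
    rho a (t+1) i (inr ⟨0, Nat.succ_pos t⟩) = inr ((i : Fin (t+1))) := by
  rw [rho_eq_sumCongr]
  show inr ((finRotate (t+1) ^ i) ⟨0, Nat.succ_pos t⟩) = _
  rw [finRotate_pow_apply]
  congr 1
  show (⟨0, Nat.succ_pos t⟩ : Fin (t+1)) + (i : Fin (t+1)) = (i : Fin (t+1))
  have h0 : (⟨0, Nat.succ_pos t⟩ : Fin (t+1)) = 0 := rfl
  rw [h0, zero_add]

open Fin.NatCast in
lemma rho_apply_inr_zero' {a b : ℕ} (hb : 1 ≤ b) {i : ℕ} (hi : i < b) :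
    rho a b i (inr ⟨0, hb⟩) = inr ⟨i, hi⟩ := by
  obtain ⟨t, rfl⟩ : ∃ t, b = t + 1 := ⟨b - 1, by omega⟩
  have h := rho_apply_inr_zero (a := a) (t := t) i
  have h2 : (⟨0, hb⟩ : Fin (t+1)) = ⟨0, Nat.succ_pos t⟩ := rfl
  rw [h2, h]
  congr 1
  exact Fin.ext (Fin.val_cast_of_lt hi)

lemma rho_inj {a b : ℕ} (ha : 1 ≤ a) (hb : 1 ≤ b) (σ : Perm (Fin a ⊕ Fin b))
    (htr : ∀ x y, ∃ g ∈ Subgroup.closure {xi0 a b, σ}, g x = y)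
    {i j : ℕ} (hi : i < b) (hj : j < b)
    (h : rho a b i * σ * (rho a b i)⁻¹ = rho a b j * σ * (rho a b j)⁻¹) : i = j := by
  have hρ : Commute ((rho a b j)⁻¹ * rho a b i) σ := by
    have h1 : σ * ((rho a b j)⁻¹ * rho a b i)
        = ((rho a b j)⁻¹ * rho a b i) * σ := by
      have h2 : (rho a b j)⁻¹ * (rho a b j * σ * (rho a b j)⁻¹) * rho a b i
          = (rho a b j)⁻¹ * (rho a b i * σ * (rho a b i)⁻¹) * rho a b i := by rw [h]
      calc σ * ((rho a b j)⁻¹ * rho a b i)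
          = (rho a b j)⁻¹ * (rho a b j * σ * (rho a b j)⁻¹) * rho a b i := by group
        _ = (rho a b j)⁻¹ * (rho a b i * σ * (rho a b i)⁻¹) * rho a b i := h2
        _ = ((rho a b j)⁻¹ * rho a b i) * σ
            * ((rho a b i)⁻¹ * rho a b i) := by group
        _ = ((rho a b j)⁻¹ * rho a b i) * σ := by group
    exact (h1.symm : _)
  have hcx : Commute ((rho a b j)⁻¹ * rho a b i) (xi0 a b) :=
    Commute.mul_left ((rho_commute_xi0 a b j).inv_left) (rho_commute_xi0 a b i)
  have hfix : ((rho a b j)⁻¹ * rho a b i) (inl ⟨0, ha⟩) = inl ⟨0, ha⟩ := by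
    rw [Equiv.Perm.mul_apply, rho_fix_inl]
    have hthis := rho_fix_inl a b j (⟨0, ha⟩ : Fin a)
    rw [Equiv.Perm.inv_eq_iff_eq]
    exact hthis.symm
  have htriv : (rho a b j)⁻¹ * rho a b i = 1 :=
    stab_trivial (xi0 a b) σ _ (inl ⟨0, ha⟩) hfix hcx hρ htr
  have hij : rho a b i = rho a b j := by
    have := congrArg (fun x => rho a b j * x) htriv
    simpa [mul_assoc] using this
  have happ := congrArg
    (fun g : Perm (Fin a ⊕ Fin b) => g (inr ⟨0, hb⟩)) hij
  rw [rho_apply_inr_zero' hb hi, rho_apply_inr_zero' hb hj, inr.injEq, Fin.mk.injEq] at happ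
  exact happ

lemma classify_rho {a b : ℕ} (ha : 1 ≤ a) (hb : 1 ≤ b) (τ : Perm (Fin a ⊕ Fin b))
    (h0 : τ (inl ⟨0, ha⟩) = inl ⟨0, ha⟩) (hc : Commute τ (xi0 a b)) :
    ∃ j : ℕ, j < b ∧ τ = rho a b j := by
  obtain ⟨j, hj, hτ⟩ := commute_xi0_classify ha hb τ h0 hc
  exact ⟨j, hj, hτ⟩

end HM
-- === chunk 8 : orbit size upper bound ===
namespace HM
open Sum
variable {γ : Type*} [DecidableEq γ] [Fintype γ]

lemma orb_le (f : Perm γ) (x : γ) (hcyc : Cyc f = 2) (h2 : 2 ≤ Fintype.card γ) :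
    orbSize f x ≤ Fintype.card γ - 1 := by
  classical
  have hsum := Equiv.Perm.sum_cycleType f
  have hfix := fixcount_add_support_card f
  have hC : Multiset.card f.cycleType + (Finset.univ.filter fun y => f y = y).card = 2 := hcyc
  by_cases hfx : f x = x
  · rw [orbSize_eq_one_of_fixed hfx]; omega
  · obtain ⟨ho1, ho2⟩ := orbSize_of_not_fixed hfx
    have hole : orbSize f x ≤ f.cycleType.sum :=
      Multiset.single_le_sum (fun y _ => Nat.zero_le y) _ ho2
    have hcpos : 0 < Multiset.card f.cycleType := by
      rw [Multiset.card_pos]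
      intro h0
      rw [h0] at ho2
      exact absurd ho2 (Multiset.notMem_zero _)
    rcases Nat.lt_or_ge (Multiset.card f.cycleType) 2 with hc | hc
    · omega
    · have hc2 : Multiset.card f.cycleType = 2 := by omega
      obtain ⟨T', hT'⟩ := Multiset.exists_cons_of_mem ho2
      have hcT' : Multiset.card T' = 1 := by
        have := congrArg Multiset.card hT'
        simp at this
        omega
      obtain ⟨y, hy⟩ := Multiset.card_eq_one.mp hcT'
      have hy2 : 2 ≤ y := by
        refine Equiv.Perm.two_le_of_mem_cycleType (σ := f) ?_
        rw [hT', hy]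
        exact Multiset.mem_cons_of_mem (Multiset.mem_singleton_self y)
      have hos : orbSize f x + y = f.cycleType.sum := by
        rw [hT', hy]
        simp
      omega

lemma orbSize_le_card (f : Perm γ) (x : γ) : orbSize f x ≤ Fintype.card γ := by
  rw [orbSize, ← Finset.card_univ]
  exact Finset.card_filter_le _ _

end HM

open HM in
/-- The two-face rooted hypermap generating function: the weight (f,σ) ↦ m^{cyc σ} n^{cyc(fσ)}
is constant on H-orbits, and its sum over the set of H-orbits of pairs (f,σ) with f having
exactly two cycles and ⟨f,σ⟩ transitive equals
∑_{b=1}^{r−1} (1/b)(P_{r−b,b}(m,n) − P_{r−b}(m,n)·P_b(m,n)). -/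
theorem two_face_rooted_hypermap_gf (r : ℕ) (hr : 2 ≤ r) (m n : ℤ) (hm : 1 ≤ m) (hn : 1 ≤ n) :
    (∀ p q : Equiv.Perm (Fin r) × Equiv.Perm (Fin r),
        (rootedRel r (le_trans one_le_two hr)).r p q →
        (m : ℚ) ^ cyc p.2 * (n : ℚ) ^ cyc (p.1 * p.2) =
          (m : ℚ) ^ cyc q.2 * (n : ℚ) ^ cyc (q.1 * q.2)) ∧
    ∀ w : Quotient (rootedRel r (le_trans one_le_two hr)) → ℚ,
      (∀ p : Equiv.Perm (Fin r) × Equiv.Perm (Fin r),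
        w (Quotient.mk (rootedRel r (le_trans one_le_two hr)) p) =
          (m : ℚ) ^ cyc p.2 * (n : ℚ) ^ cyc (p.1 * p.2)) →
      (∑ᶠ q ∈ {q : Quotient (rootedRel r (le_trans one_le_two hr)) |
          ∃ p : Equiv.Perm (Fin r) × Equiv.Perm (Fin r),
            cyc p.1 = 2 ∧
            (∀ i j : Fin r, ∃ g ∈ Subgroup.closure {p.1, p.2}, g i = j) ∧
            Quotient.mk (rootedRel r (le_trans one_le_two hr)) p = q}, w q) =
        ∑ b ∈ Finset.Icc 1 (r - 1),
          (1 / (b : ℚ)) * (Ptwo (r - b) b m n - Pone (r - b) m n * Pone b m n) := by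
  classical
  constructor
  · rintro p q ⟨τ, h0, h1, h2⟩
    have e3 : (τ * p.1 * τ⁻¹) * (τ * p.2 * τ⁻¹) = τ * (p.1 * p.2) * τ⁻¹ := by group
    rw [h1, h2, e3]
    simp only [HM.cyc_eq_Cyc]
    rw [HM.Cyc_conj, HM.Cyc_conj]
  · set Rel := rootedRel r (le_trans one_le_two hr) with hRel
    set root : Fin r := ⟨0, le_trans one_le_two hr⟩ with hrootdef
    intro w hw
    have hSfin : Set.Finite {q : Quotient Rel |
        ∃ p : Equiv.Perm (Fin r) × Equiv.Perm (Fin r),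
          cyc p.1 = 2 ∧
          (∀ i j : Fin r, ∃ g ∈ Subgroup.closure {p.1, p.2}, g i = j) ∧
          Quotient.mk Rel p = q} := Set.toFinite _
    rw [← Set.Finite.coe_toFinset hSfin, finsum_mem_coe_finset]
    -- the b-statistic
    have hBwd : ∀ p p' : Equiv.Perm (Fin r) × Equiv.Perm (Fin r), Rel.r p p' →
        r - HM.orbSize p.1 root = r - HM.orbSize p'.1 root := by
      rintro p p' ⟨τ, h0, h1, h2⟩
      have h0' : τ root = root := h0
      have hos : HM.orbSize (τ * p.1 * τ⁻¹) root = HM.orbSize p.1 root := by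
        have hoc := HM.orbSize_conj p.1 τ root
        rw [h0'] at hoc
        exact hoc
      rw [h1, hos]
    set B : Quotient Rel → ℕ :=
      Quotient.lift (fun p : Equiv.Perm (Fin r) × Equiv.Perm (Fin r) =>
        r - HM.orbSize p.1 root) hBwd with hBdef
    have hBmk : ∀ p, B (Quotient.mk Rel p) = r - HM.orbSize p.1 root := fun p => rfl
    have hmaps : ∀ q ∈ hSfin.toFinset, B q ∈ Finset.Icc 1 (r - 1) := by
      intro q hq
      rw [Set.Finite.mem_toFinset] at hq
      obtain ⟨p, hp2, hptr, rfl⟩ := hq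
      rw [hBmk]
      have h1 := HM.orbSize_pos p.1 root
      have h2 : HM.orbSize p.1 root ≤ r - 1 := by
        have h3 := HM.orb_le p.1 root hp2 (by rw [Fintype.card_fin]; omega)
        rwa [Fintype.card_fin] at h3
      rw [Finset.mem_Icc]
      omega
    rw [← Finset.sum_fiberwise_of_maps_to hmaps w]
    apply Finset.sum_congr rfl
    intro b hbIcc
    rw [Finset.mem_Icc] at hbIcc
    obtain ⟨hb1, hbr⟩ := hbIcc
    set a := r - b with hadef
    have hab : a + b = r := by omega
    have ha1 : 1 ≤ a := by omega
    set E : (Fin a ⊕ Fin b) ≃ Fin r := finSumFinEquiv.trans (finCongr hab) with hEdef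
    have hEroot : E (Sum.inl ⟨0, ha1⟩) = root := by
      apply Fin.ext
      simp [hEdef, hrootdef]
    set ξ : Equiv.Perm (Fin r) := HM.pCongr E (HM.xi0 a b) with hXdef
    have hX2 : cyc ξ = 2 := by
      rw [HM.cyc_eq_Cyc, hXdef, HM.Cyc_pCongr, HM.xi0, HM.Cyc_sumCongr,
        HM.Cyc_finRotate ha1, HM.Cyc_finRotate hb1]
    have hXorb : HM.orbSize ξ root = a := by
      rw [← hEroot, hXdef, HM.orbSize_pCongr]
      exact HM.orbSize_xi0_inl _
    set φ : Equiv.Perm (Fin a ⊕ Fin b) → Quotient Rel :=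
      fun σ => Quotient.mk Rel (ξ, HM.pCongr E σ) with hφdef
    set TS : Finset (Equiv.Perm (Fin a ⊕ Fin b)) :=
      Finset.univ.filter (fun σ => ∀ x y, ∃ g ∈ Subgroup.closure {HM.xi0 a b, σ}, g x = y)
      with hTSdef
    have htrans : ∀ σ : Equiv.Perm (Fin a ⊕ Fin b),
        (∀ x y : Fin r, ∃ g ∈ Subgroup.closure {ξ, HM.pCongr E σ}, g x = y)
          ↔ (∀ x y, ∃ g ∈ Subgroup.closure {HM.xi0 a b, σ}, g x = y) :=
      fun σ => HM.trans_pCongr_iff E (HM.xi0 a b) σ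
    have hφS : ∀ σ ∈ TS, φ σ ∈ hSfin.toFinset ∧ B (φ σ) = b := by
      intro σ hσ
      rw [hTSdef, Finset.mem_filter] at hσ
      constructor
      · rw [Set.Finite.mem_toFinset]
        exact ⟨(ξ, HM.pCongr E σ), hX2, (htrans σ).mpr hσ.2, rfl⟩
      · rw [hφdef, hBmk]
        show r - HM.orbSize ξ root = b
        rw [hXorb]
        omega
    have hC1 : hSfin.toFinset.filter (fun q => B q = b) = TS.image φ := by
      apply Finset.Subset.antisymm
      · intro q hq
        rw [Finset.mem_filter] at hq
        obtain ⟨hqS, hqB⟩ := hq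
        rw [Set.Finite.mem_toFinset] at hqS
        obtain ⟨p, hp2, hptr, hpq⟩ := hqS
        have horbp : HM.orbSize p.1 root = a := by
          have hBq : r - HM.orbSize p.1 root = b := by
            rw [← hpq, hBmk] at hqB
            exact hqB
          have h1 := HM.orbSize_pos p.1 root
          have h2 := HM.orbSize_le_card p.1 root
          rw [Fintype.card_fin] at h2
          omega
        obtain ⟨τ, hτroot, hτconj⟩ := HM.conj_exists ha1 hb1 E p.1 hp2
          (by rw [hEroot]; exact horbp)
        have hre : HM.pCongr E ((HM.pCongr E).symm (τ⁻¹ * p.2 * τ)) = τ⁻¹ * p.2 * τ :=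
          (HM.pCongr E).apply_symm_apply _
        refine Finset.mem_image.mpr ⟨(HM.pCongr E).symm (τ⁻¹ * p.2 * τ), ?_, ?_⟩
        · rw [hTSdef, Finset.mem_filter]
          refine ⟨Finset.mem_univ _, ?_⟩
          rw [← htrans _, hre]
          have h1 : τ⁻¹ * p.1 * τ⁻¹⁻¹ = ξ := by rw [← hτconj]; group; rfl
          have h2 := HM.trans_conj τ⁻¹ hptr
          rw [h1, inv_inv] at h2
          exact h2
        · rw [hφdef]
          show Quotient.mk Rel (ξ, HM.pCongr E ((HM.pCongr E).symm (τ⁻¹ * p.2 * τ))) = q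
          rw [hre, ← hpq]
          apply Quotient.sound
          refine ⟨τ, hτroot, ?_, ?_⟩
          · exact hτconj.symm
          · group
      · intro q hq
        obtain ⟨σ, hσ, rfl⟩ := Finset.mem_image.mp hq
        obtain ⟨hm1, hm2⟩ := hφS σ hσ
        rw [Finset.mem_filter]
        exact ⟨hm1, hm2⟩
    have hC2 : ∀ σ ∈ TS, (TS.filter fun σ' => φ σ' = φ σ).card = b := by
      intro σ hσ
      have hσtr : ∀ x y, ∃ g ∈ Subgroup.closure {HM.xi0 a b, σ}, g x = y := by
        rw [hTSdef, Finset.mem_filter] at hσ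
        exact hσ.2
      have hrhofix : ∀ i : ℕ, HM.pCongr E (HM.rho a b i) root = root := by
        intro i
        rw [← hEroot]
        show E (HM.rho a b i (E.symm (E _))) = _
        rw [Equiv.symm_apply_apply, HM.rho_fix_inl]
      have hmemTS : ∀ i : ℕ, HM.rho a b i * σ * (HM.rho a b i)⁻¹ ∈ TS := by
        intro i
        rw [hTSdef, Finset.mem_filter]
        refine ⟨Finset.mem_univ _, ?_⟩
        have h2 := HM.trans_conj (HM.rho a b i) hσtr
        have h1 : HM.rho a b i * HM.xi0 a b * (HM.rho a b i)⁻¹ = HM.xi0 a b := by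
          rw [(HM.rho_commute_xi0 a b i).eq]
          group
        rwa [h1] at h2
      have hφeq : ∀ i : ℕ, φ (HM.rho a b i * σ * (HM.rho a b i)⁻¹) = φ σ := by
        intro i
        rw [hφdef]
        apply Quotient.sound
        refine ⟨HM.pCongr E (HM.rho a b i)⁻¹, ?_, ?_, ?_⟩
        · rw [map_inv, Equiv.Perm.inv_eq_iff_eq]
          exact (hrhofix i).symm
        · show ξ = _
          rw [hXdef, ← map_inv, ← map_mul, ← map_mul]
          congr 1
          rw [(HM.rho_commute_xi0 a b i).inv_left.eq]
          group
        · show HM.pCongr E σ = _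
          rw [← map_inv, ← map_mul, ← map_mul]
          congr 1
          group
      apply Finset.card_eq_of_bijective
        (fun i _ => HM.rho a b i * σ * (HM.rho a b i)⁻¹)
      · intro σ'' hσ''
        rw [Finset.mem_filter] at hσ''
        obtain ⟨hσ''TS, hφe⟩ := hσ''
        have hrel := Quotient.exact hφe
        obtain ⟨τ, hτ0, hτ1, hτ2⟩ := hrel
        have hτ0' : τ root = root := hτ0
        set τ₀ := (HM.pCongr E).symm τ with hτ₀def
        have hτ₀fix : τ₀ (Sum.inl ⟨0, ha1⟩) = Sum.inl ⟨0, ha1⟩ := by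
          rw [hτ₀def]
          show E.symm (τ (E _)) = _
          rw [hEroot, hτ0', ← hEroot, Equiv.symm_apply_apply]
        have h3 := congrArg (HM.pCongr E).symm hτ1
        rw [map_mul, map_mul, map_inv] at h3
        rw [hXdef, (HM.pCongr E).symm_apply_apply] at h3
        have hτ₀c : Commute τ₀ (HM.xi0 a b) := by
          have h4 : HM.xi0 a b * τ₀ = τ₀ * HM.xi0 a b := by
            rw [← hτ₀def] at h3
            nth_rewrite 1 [h3]
            group
          exact h4.symm
        have h5 := congrArg (HM.pCongr E).symm hτ2
        rw [map_mul, map_mul, map_inv] at h5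
        rw [(HM.pCongr E).symm_apply_apply, (HM.pCongr E).symm_apply_apply] at h5
        rw [← hτ₀def] at h5
        -- h5 : σ = τ₀ * σ'' * τ₀⁻¹
        have hτ₀invfix : τ₀⁻¹ (Sum.inl ⟨0, ha1⟩) = Sum.inl ⟨0, ha1⟩ := by
          rw [Equiv.Perm.inv_eq_iff_eq]
          exact hτ₀fix.symm
        obtain ⟨j, hjb, hj⟩ := HM.classify_rho ha1 hb1 τ₀⁻¹ hτ₀invfix hτ₀c.inv_left
        refine ⟨j, hjb, ?_⟩
        rw [← hj, inv_inv]
        rw [h5]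
        group
      · intro i _
        rw [Finset.mem_filter]
        exact ⟨hmemTS i, hφeq i⟩
      · intro i j hi hj heq
        exact HM.rho_inj ha1 hb1 σ hσtr hi hj heq
    -- final computation
    have hwφ : ∀ σ ∈ TS, w (φ σ)
        = (m : ℚ) ^ HM.Cyc σ * (n : ℚ) ^ HM.Cyc (HM.xi0 a b * σ) := by
      intro σ _
      rw [hφdef, hw (ξ, HM.pCongr E σ)]
      show (m : ℚ) ^ cyc (HM.pCongr E σ) * (n : ℚ) ^ cyc (ξ * HM.pCongr E σ) = _
      have h1 : ξ * HM.pCongr E σ = HM.pCongr E (HM.xi0 a b * σ) := by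
        rw [hXdef, ← map_mul]
      rw [h1]
      simp only [HM.cyc_eq_Cyc, HM.Cyc_pCongr]
    have hsc := Finset.sum_comp w φ (s := TS)
    have hfib : ∑ σ ∈ TS, w (φ σ) = (b : ℚ) * ∑ q ∈ TS.image φ, w q := by
      rw [hsc, Finset.mul_sum]
      apply Finset.sum_congr rfl
      intro q hq
      obtain ⟨σ, hσ, rfl⟩ := Finset.mem_image.mp hq
      rw [hC2 σ hσ, nsmul_eq_mul]
    have hTSsum : ∑ σ ∈ TS, w (φ σ) = Ptwo a b m n - Pone a m n * Pone b m n := by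
      rw [Finset.sum_congr rfl hwφ]
      exact HM.TS_sum ha1 hb1 m n
    have hb0 : (b : ℚ) ≠ 0 := Nat.cast_ne_zero.mpr (by omega)
    rw [hC1]
    rw [← hTSsum, hfib]
    field_simp
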